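/- Fix n ≥ 1, p ∈ [0,1], x_0 ≥ 1, strictly increasing observation times 0 = t_0 < t_1 < ⋯ < t_n, and (y_1, …, y_n) ∈ ℕ^n. Then the map λ ↦ L(x_0, y_1, …, y_n) (with υ_{i−1} = exp(−λ(t_i − t_{i−1}))) is differentiable on (0, ∞), and its derivative equals Σ_{(x_1,…,x_n) ∈ (ℕ∖{0})^n} Σ_{j=1}^{n} (t_j − t_{j−1}) · ((x_j υ_{j−1} − x_{j−1}) / (1 − υ_{j−1})) · Π_{i=1}^{n} C(x_i, y_i) p^{y_i} q^{x_i − y_i} C(x_i − 1, x_{i−1} − 1) υ_{i−1}^{x_{i−1}} (1 − υ_{i−1})^{x_i − x_{i−1}}, this series being absolutely convergent. -/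

import Mathlib

open scoped BigOperators

noncomputable section

/-- Binomial coefficient `C(m,k)` for integers, with the convention that it is `0`
when `k < 0` or `k > m`. -/
def ichoose (m k : ℤ) : ℝ := if 0 ≤ k ∧ k ≤ m then ((m.toNat).choose k.toNat : ℝ) else 0

/-- The previous population size: `prevx x0 xs i` is `x0` if `i = 0` and `xs (i-1)` otherwise. -/
def prevx (x0 : ℕ) (xs : ℕ → ℕ) (i : ℕ) : ℕ := if i = 0 then x0 else xs (i - 1)

/-- Extension of a tuple `f : Fin n → ℕ` to all of `ℕ`, with default value `d` beyond `n`. -/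
def extFin (n : ℕ) (f : Fin n → ℕ) (d : ℕ) : ℕ → ℕ := fun i => if h : i < n then f ⟨i, h⟩ else d

/-- Extension of a positive tuple of population sizes to all of `ℕ`. -/
def xbar (n : ℕ) (x : Fin n → ℕ+) : ℕ → ℕ := extFin n (fun j => (x j : ℕ)) 1

/-- The summand of the POPBP likelihood: for hidden trajectory `xs = (x_1, …, x_n)`
(indexed here by `i ∈ {0, …, n-1}`, so `xs i = x_{i+1}`), data `y = (y_1, …, y_n)`
(again `y i = y_{i+1}`), initial population `x0`, detection probability `p` and
transition parameters `υ = (υ_0, …, υ_{n-1})`, this is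
`∏_{i=1}^{n} C(x_i, y_i) p^{y_i} q^{x_i - y_i} C(x_i - 1, x_{i-1} - 1) υ_{i-1}^{x_{i-1}} (1-υ_{i-1})^{x_i - x_{i-1}}`. -/
def popbpTerm (n : ℕ) (p : ℝ) (υ : ℕ → ℝ) (x0 : ℕ) (y : ℕ → ℕ) (xs : ℕ → ℕ) : ℝ :=
  ∏ i ∈ Finset.range n,
    (ichoose (xs i) (y i) * p ^ (y i) * (1 - p) ^ (xs i - y i) *
      ichoose ((xs i : ℤ) - 1) ((prevx x0 xs i : ℤ) - 1) *
      υ i ^ (prevx x0 xs i) * (1 - υ i) ^ (xs i - prevx x0 xs i))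

/-- The POPBP likelihood `L(x_0, y_1, …, y_n)`: the sum over hidden trajectories
`(x_1, …, x_n) ∈ (ℕ∖{0})^n` of `popbpTerm`. -/
def popbpL (n : ℕ) (p : ℝ) (υ : ℕ → ℝ) (x0 : ℕ) (y : Fin n → ℕ) : ℝ :=
  ∑' x : Fin n → ℕ+, popbpTerm n p υ x0 (extFin n y 0) (xbar n x)

/-- The transition parameters `υ_{i} = exp(-λ (t_{i+1} - t_i))` of the pure birth process
with birth rate `lam` and observation times `t`. -/
def upsRate (lam : ℝ) (t : ℕ → ℝ) (i : ℕ) : ℝ := Real.exp (-lam * (t (i + 1) - t i))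

/-- The summand `g(y) = (∂L/∂λ (x0, y))² / L(x0, y)` of the Fisher information of the POPBP,
taken to be `0` when `L(x0, y) = 0`. -/
def popbpG (n : ℕ) (p : ℝ) (t : ℕ → ℝ) (lam : ℝ) (x0 : ℕ) (y : Fin n → ℕ) : ℝ :=
  if popbpL n p (upsRate lam t) x0 y = 0 then 0
  else (deriv (fun μ => popbpL n p (upsRate μ t) x0 y) lam) ^ 2 /
    popbpL n p (upsRate lam t) x0 y

/-- The Fisher information `FI(λ; t_1, …, t_n) = Σ_{y ∈ ℕ^n} (∂L/∂λ (x0, y))² / L(x0, y)`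
of the POPBP with birth rate `lam`, detection probability `p`, initial population `x0`
and observation times `t`. -/
def popbpFI (n : ℕ) (p : ℝ) (t : ℕ → ℝ) (lam : ℝ) (x0 : ℕ) : ℝ :=
  ∑' y : Fin n → ℕ, popbpG n p t lam x0 y

/-! The likelihood is differentiated term by term. Each summand is a product over the observation
intervals of factors `c · υ ^ a (1 - υ) ^ (b - a)` with `υ = exp (-λ d)`, whose logarithmic
derivative in `λ` is `d (b υ - a) / (1 - υ)`. For `ν` within `ε` of `λ`, the termwise derivatives
are dominated by a multiple of the trajectory probability of the birth process at rate `λ + ε`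
times `ρ ^ x_n` with `ρ` close to `1`; this is summable because the population at time `t_n`
is negative binomial, whose generating function is finite at `ρ` when
`ρ (1 - exp (-(λ + ε) (t_n - t_0))) < 1`. -/

open Finset Real

lemma ichoose_nonneg (m k : ℤ) : 0 ≤ ichoose m k := by
  unfold ichoose; split <;> positivity

lemma ichoose_eq_zero_of_lt {m k : ℤ} (h : m < k) : ichoose m k = 0 := by
  simp [ichoose, not_le_of_gt h]

lemma ichoose_natCast {m k : ℕ} (h : k ≤ m) : ichoose m k = (m.choose k : ℝ) := by
  simp [ichoose, h]

lemma ichoose_natCast_sub_one {m k : ℕ} (hk : 1 ≤ k) (h : k ≤ m) :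
    ichoose ((m : ℤ) - 1) ((k : ℤ) - 1) = ((m - 1).choose (k - 1) : ℝ) := by
  rw [show (m : ℤ) - 1 = ((m - 1 : ℕ) : ℤ) by omega,
    show (k : ℤ) - 1 = ((k - 1 : ℕ) : ℤ) by omega, ichoose_natCast (by omega)]

def detectProb (p : ℝ) (x y : ℕ) : ℝ := ichoose x y * p ^ y * (1 - p) ^ (x - y)

lemma detectProb_nonneg {p : ℝ} (hp : p ∈ Set.Icc (0 : ℝ) 1) (x y : ℕ) :
    0 ≤ detectProb p x y := by
  have := ichoose_nonneg x y
  have : 0 ≤ 1 - p := sub_nonneg.2 hp.2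
  have := hp.1
  unfold detectProb; positivity

lemma detectProb_le_one {p : ℝ} (hp : p ∈ Set.Icc (0 : ℝ) 1) (x y : ℕ) :
    detectProb p x y ≤ 1 := by
  rcases lt_or_ge x y with hxy | hyx
  · simp [detectProb, ichoose_eq_zero_of_lt (Int.ofNat_lt.2 hxy)]
  have hq : 0 ≤ 1 - p := sub_nonneg.2 hp.2
  calc detectProb p x y = p ^ y * (1 - p) ^ (x - y) * x.choose y := by
        rw [detectProb, ichoose_natCast hyx]; ring
    _ ≤ ∑ k ∈ range (x + 1), p ^ k * (1 - p) ^ (x - k) * x.choose k :=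
        single_le_sum (f := fun k => p ^ k * (1 - p) ^ (x - k) * x.choose k)
          (fun k _ => by have := hp.1; positivity) (mem_range.2 (by omega))
    _ = 1 := by rw [← add_pow]; norm_num

/-- The transition probability of the pure birth process from `a` to `b` individuals over an
interval in which each individual has no offspring with probability `υ`. -/
def birthFactor (υ : ℝ) (a b : ℕ) : ℝ :=
  ichoose ((b : ℤ) - 1) ((a : ℤ) - 1) * υ ^ a * (1 - υ) ^ (b - a)

lemma birthFactor_nonneg {υ : ℝ} (hυ : υ ∈ Set.Icc (0 : ℝ) 1) (a b : ℕ) :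
    0 ≤ birthFactor υ a b := by
  have := ichoose_nonneg ((b : ℤ) - 1) ((a : ℤ) - 1)
  have : 0 ≤ 1 - υ := sub_nonneg.2 hυ.2
  have := hυ.1
  unfold birthFactor; positivity

lemma birthFactor_eq_zero_of_lt (υ : ℝ) {a b : ℕ} (h : b < a) : birthFactor υ a b = 0 := by
  simp [birthFactor, ichoose_eq_zero_of_lt (show (b : ℤ) - 1 < (a : ℤ) - 1 by omega)]

lemma hasSum_birthFactor_mul_pow {υ r : ℝ} (hr : ‖(1 - υ) * r‖ < 1) {a : ℕ} (ha : 1 ≤ a) :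
    HasSum (fun b : ℕ+ => birthFactor υ a b * r ^ (b : ℕ))
      ((υ * r / (1 - (1 - υ) * r)) ^ a) := by
  have hden : 1 - (1 - υ) * r ≠ 0 := fun h => by
    rw [sub_eq_zero] at h; rw [← h, norm_one] at hr; exact lt_irrefl _ hr
  let ι : ℕ → ℕ+ := fun k => ⟨a + k, by omega⟩
  have hι : Function.Injective ι := fun k l h => by
    have : a + k = a + l := congrArg Subtype.val h
    omega
  have hzero : ∀ b ∉ Set.range ι, birthFactor υ a b * r ^ (b : ℕ) = 0 := fun b hb => by
    rw [birthFactor_eq_zero_of_lt υ, zero_mul]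
    by_contra! h
    exact hb ⟨b - a, PNat.eq (by simp [ι]; omega)⟩
  refine (hι.hasSum_iff hzero).1 ?_
  have hgeom := (hasSum_choose_mul_geometric_of_norm_lt_one (a - 1) hr).mul_right (υ ^ a * r ^ a)
  rw [Nat.sub_add_cancel ha] at hgeom
  have hterm : (fun b : ℕ+ => birthFactor υ a b * r ^ (b : ℕ)) ∘ ι =
      fun k => ((k + (a - 1)).choose (a - 1) : ℝ) * ((1 - υ) * r) ^ k * (υ ^ a * r ^ a) := by
    funext k
    change birthFactor υ a (a + k) * r ^ (a + k) = _
    rw [birthFactor, ichoose_natCast_sub_one ha (by omega), show a + k - 1 = k + (a - 1) by omega,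
      Nat.add_sub_cancel_left, pow_add, mul_pow]
    ring
  have hsum : (υ * r / (1 - (1 - υ) * r)) ^ a = 1 / (1 - (1 - υ) * r) ^ a * (υ ^ a * r ^ a) := by
    rw [div_pow, mul_pow]
    field_simp
  rw [hterm, hsum]
  exact hgeom

def birthWeight (υ : ℕ → ℝ) (x0 m : ℕ) (xs : ℕ → ℕ) : ℝ :=
  ∏ i ∈ range m, birthFactor (υ i) (prevx x0 xs i) (xs i)

lemma birthWeight_nonneg {υ : ℕ → ℝ} {m : ℕ} (hυ : ∀ i < m, υ i ∈ Set.Icc (0 : ℝ) 1)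
    (x0 : ℕ) (xs : ℕ → ℕ) : 0 ≤ birthWeight υ x0 m xs :=
  prod_nonneg fun i hi => birthFactor_nonneg (hυ i (mem_range.1 hi)) _ _

lemma birthWeight_eq_zero_of_lt {υ : ℕ → ℝ} {x0 m : ℕ} {xs : ℕ → ℕ} {i : ℕ} (hi : i < m)
    (h : xs i < prevx x0 xs i) : birthWeight υ x0 m xs = 0 :=
  prod_eq_zero (mem_range.2 hi) (birthFactor_eq_zero_of_lt _ h)

lemma popbpTerm_eq_prod (n : ℕ) (p : ℝ) (υ : ℕ → ℝ) (x0 : ℕ) (y xs : ℕ → ℕ) :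
    popbpTerm n p υ x0 y xs =
      ∏ i ∈ range n, detectProb p (xs i) (y i) * birthFactor (υ i) (prevx x0 xs i) (xs i) := by
  unfold popbpTerm detectProb birthFactor
  refine prod_congr rfl fun i _ => ?_
  ring

lemma popbpTerm_nonneg {n : ℕ} {p : ℝ} (hp : p ∈ Set.Icc (0 : ℝ) 1) {υ : ℕ → ℝ}
    (hυ : ∀ i < n, υ i ∈ Set.Icc (0 : ℝ) 1) (x0 : ℕ) (y xs : ℕ → ℕ) :
    0 ≤ popbpTerm n p υ x0 y xs := by
  rw [popbpTerm_eq_prod]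
  exact prod_nonneg fun i hi =>
    mul_nonneg (detectProb_nonneg hp _ _) (birthFactor_nonneg (hυ i (mem_range.1 hi)) _ _)

lemma popbpTerm_le_birthWeight {n : ℕ} {p : ℝ} (hp : p ∈ Set.Icc (0 : ℝ) 1) {υ : ℕ → ℝ}
    (hυ : ∀ i < n, υ i ∈ Set.Icc (0 : ℝ) 1) (x0 : ℕ) (y xs : ℕ → ℕ) :
    popbpTerm n p υ x0 y xs ≤ birthWeight υ x0 n xs := by
  rw [popbpTerm_eq_prod, birthWeight]
  refine prod_le_prod (fun i hi => ?_) fun i hi => ?_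
  · exact mul_nonneg (detectProb_nonneg hp _ _) (birthFactor_nonneg (hυ i (mem_range.1 hi)) _ _)
  · exact mul_le_of_le_one_left (birthFactor_nonneg (hυ i (mem_range.1 hi)) _ _)
      (detectProb_le_one hp _ _)

lemma prevx_le_prevx {x0 m : ℕ} {xs : ℕ → ℕ} (h : ∀ i < m, prevx x0 xs i ≤ xs i) {j : ℕ}
    (hj : j ≤ m) : prevx x0 xs j ≤ prevx x0 xs m := by
  induction m, hj using Nat.le_induction with
  | base => rfl
  | succ k hjk ih =>
    exact (ih fun i hi => h i (by omega)).trans (h k (by omega))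

lemma prevx_xbar_pos {x0 : ℕ} (hx0 : 1 ≤ x0) (m : ℕ) (x : Fin m → ℕ+) (i : ℕ) :
    1 ≤ prevx x0 (xbar m x) i := by
  unfold prevx xbar extFin
  split_ifs
  exacts [hx0, (x _).pos, le_rfl]

lemma xbar_snoc_of_lt {m : ℕ} (z : Fin m → ℕ+) (b : ℕ+) {i : ℕ} (h : i < m) :
    xbar (m + 1) (Fin.snoc z b) i = xbar m z i := by
  simp only [xbar, extFin, dif_pos h, dif_pos (h.trans m.lt_succ_self)]
  exact congrArg _ (Fin.snoc_castSucc (α := fun _ => ℕ+) (i := ⟨i, h⟩) ..)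

lemma xbar_snoc_self {m : ℕ} (z : Fin m → ℕ+) (b : ℕ+) :
    xbar (m + 1) (Fin.snoc z b) m = b := by
  simp only [xbar, extFin, dif_pos m.lt_succ_self]
  exact congrArg _ (Fin.snoc_last (α := fun _ => ℕ+) ..)

lemma prevx_xbar_snoc_of_le {x0 m : ℕ} (z : Fin m → ℕ+) (b : ℕ+) {i : ℕ} (h : i ≤ m) :
    prevx x0 (xbar (m + 1) (Fin.snoc z b)) i = prevx x0 (xbar m z) i := by
  unfold prevx
  split_ifs
  exacts [rfl, xbar_snoc_of_lt z b (by omega)]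

lemma prevx_xbar_snoc_succ (x0 : ℕ) {m : ℕ} (z : Fin m → ℕ+) (b : ℕ+) :
    prevx x0 (xbar (m + 1) (Fin.snoc z b)) (m + 1) = b :=
  xbar_snoc_self z b

lemma birthWeight_xbar_snoc (υ : ℕ → ℝ) (x0 m : ℕ) (z : Fin m → ℕ+) (b : ℕ+) :
    birthWeight υ x0 (m + 1) (xbar (m + 1) (Fin.snoc z b)) =
      birthWeight υ x0 m (xbar m z) * birthFactor (υ m) (prevx x0 (xbar m z) m) b := by
  rw [birthWeight, prod_range_succ, xbar_snoc_self, prevx_xbar_snoc_of_le z b le_rfl, birthWeight]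
  congr 1
  refine prod_congr rfl fun i hi => ?_
  have hi := mem_range.1 hi
  rw [xbar_snoc_of_lt z b hi, prevx_xbar_snoc_of_le z b hi.le]

/-- Summing out the last population size replaces `r` by `υ r / (1 - (1 - υ) r)`, which
preserves the condition on `r`. -/
theorem summable_birthWeight_mul_pow {m : ℕ} {υ : ℕ → ℝ} (hυ : ∀ i < m, υ i ∈ Set.Icc (0 : ℝ) 1)
    {r : ℝ} (hr : 0 ≤ r) (hrυ : r * (1 - ∏ i ∈ range m, υ i) < 1) {x0 : ℕ} (hx0 : 1 ≤ x0) :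
    Summable fun x : Fin m → ℕ+ => birthWeight υ x0 m (xbar m x) * r ^ prevx x0 (xbar m x) m := by
  induction m generalizing r with
  | zero => exact (hasSum_fintype _).summable
  | succ m ih =>
    have hυ' : ∀ i < m, υ i ∈ Set.Icc (0 : ℝ) 1 := fun i hi => hυ i (by omega)
    obtain ⟨hυm0, hυm1⟩ := hυ m m.lt_succ_self
    set P := ∏ i ∈ range m, υ i
    have hP1 : P ≤ 1 := prod_le_one (fun i hi => (hυ' i (mem_range.1 hi)).1)
      fun i hi => (hυ' i (mem_range.1 hi)).2
    rw [prod_range_succ] at hrυ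
    have hs0 : 0 ≤ (1 - υ m) * r := mul_nonneg (by linarith) hr
    have hs1 : (1 - υ m) * r < 1 := by
      nlinarith [mul_nonneg (mul_nonneg hυm0 (sub_nonneg.2 hP1)) hr]
    have hs : ‖(1 - υ m) * r‖ < 1 := by rwa [Real.norm_of_nonneg hs0]
    set r' := υ m * r / (1 - (1 - υ m) * r)
    have hr' : 0 ≤ r' := div_nonneg (mul_nonneg hυm0 hr) (by linarith)
    have hr'υ : r' * (1 - P) < 1 := by
      rw [div_mul_eq_mul_div, div_lt_one (by linarith)]
      linarith
    have hfiber (z : Fin m → ℕ+) := (hasSum_birthFactor_mul_pow hs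
      (prevx_xbar_pos hx0 m z m)).mul_left (birthWeight υ x0 m (xbar m z))
    rw [← ((Equiv.prodComm _ _).trans (Fin.snocEquiv fun _ => ℕ+)).summable_iff]
    simp only [Function.comp_def, Equiv.trans_apply, Equiv.prodComm_apply, Prod.fst_swap,
      Prod.snd_swap, Fin.snocEquiv, Equiv.coe_fn_mk, birthWeight_xbar_snoc, prevx_xbar_snoc_succ,
      mul_assoc]
    refine (summable_prod_of_nonneg fun zb => ?_).2 ⟨fun z => (hfiber z).summable, ?_⟩
    · exact mul_nonneg (birthWeight_nonneg hυ' _ _)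
        (mul_nonneg (birthFactor_nonneg ⟨hυm0, hυm1⟩ _ _) (pow_nonneg hr _))
    · simp only [(hfiber _).tsum_eq]
      exact ih hυ' hr' hr'υ

theorem HasDerivAt.finsetProd_of_eq_mul {𝕜 ι : Type*} [NontriviallyNormedField 𝕜]
    {s : Finset ι} {f : ι → 𝕜 → 𝕜} {g : ι → 𝕜} {x : 𝕜}
    (hf : ∀ i ∈ s, HasDerivAt (f i) (g i * f i x) x) :
    HasDerivAt (fun y => ∏ i ∈ s, f i y) ((∑ i ∈ s, g i) * ∏ i ∈ s, f i x) x := by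
  classical
  refine (HasDerivAt.fun_finsetProd hf).congr_deriv ?_
  rw [sum_mul]
  refine sum_congr rfl fun i hi => ?_
  rw [smul_eq_mul, ← prod_erase_mul _ _ hi]
  ring

lemma hasDerivAt_birthFactor_exp {d μ : ℝ} (hμd : μ * d ≠ 0) (a b : ℕ) :
    HasDerivAt (fun ν => birthFactor (exp (-ν * d)) a b)
      (d * ((b * exp (-μ * d) - a) / (1 - exp (-μ * d))) * birthFactor (exp (-μ * d)) a b) μ := by
  rcases lt_or_ge b a with hba | hab
  · simp only [birthFactor_eq_zero_of_lt _ hba, mul_zero]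
    exact hasDerivAt_const _ _
  obtain ⟨c, rfl⟩ := Nat.exists_eq_add_of_le hab
  have hυ : 1 - exp (-μ * d) ≠ 0 := by
    rw [sub_ne_zero, ne_comm, Ne, exp_eq_one_iff]
    simpa [neg_mul] using hμd
  have hE : HasDerivAt (fun ν => exp (-ν * d)) (exp (-μ * d) * (-1 * d)) μ :=
    ((hasDerivAt_id μ).neg.mul_const d).exp
  have h := ((hE.pow a).mul ((hE.const_sub 1).pow c)).const_mul
    (ichoose (((a + c : ℕ) : ℤ) - 1) ((a : ℤ) - 1))
  simp only [birthFactor, Nat.add_sub_cancel_left, mul_assoc]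
  refine h.congr_deriv ?_
  simp only [Pi.pow_apply]
  generalize exp (-μ * d) = υ at hυ ⊢
  rcases a with _ | a <;> rcases c with _ | c <;>
    · simp only [Nat.add_sub_cancel, Nat.zero_sub, pow_succ, pow_zero]
      field_simp
      push_cast
      ring

lemma upsRate_mem_Icc {ν : ℝ} {t : ℕ → ℝ} {i : ℕ} (hν : 0 ≤ ν) (ht : t i ≤ t (i + 1)) :
    upsRate ν t i ∈ Set.Icc (0 : ℝ) 1 :=
  ⟨(exp_pos _).le, exp_le_one_iff.2 (by nlinarith)⟩

lemma prod_upsRate (lam : ℝ) (t : ℕ → ℝ) (n : ℕ) :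
    ∏ i ∈ range n, upsRate lam t i = exp (-lam * (t n - t 0)) := by
  rw [← sum_range_sub, mul_sum, exp_sum]
  rfl

def popbpScore (n : ℕ) (t : ℕ → ℝ) (lam : ℝ) (x0 : ℕ) (xs : ℕ → ℕ) : ℝ :=
  ∑ j ∈ range n,
    (t (j + 1) - t j) *
      (((xs j : ℝ) * upsRate lam t j - (prevx x0 xs j : ℝ)) / (1 - upsRate lam t j))

lemma hasDerivAt_popbpTerm_upsRate {n : ℕ} (p : ℝ) {t : ℕ → ℝ} (ht : ∀ i < n, t i < t (i + 1))
    (x0 : ℕ) (y xs : ℕ → ℕ) {μ : ℝ} (hμ : 0 < μ) :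
    HasDerivAt (fun ν => popbpTerm n p (upsRate ν t) x0 y xs)
      (popbpScore n t μ x0 xs * popbpTerm n p (upsRate μ t) x0 y xs) μ := by
  simp only [popbpTerm_eq_prod, popbpScore]
  refine HasDerivAt.finsetProd_of_eq_mul fun i hi => ?_
  have hd : μ * (t (i + 1) - t i) ≠ 0 := (mul_pos hμ (sub_pos.2 (ht i (mem_range.1 hi)))).ne'
  refine ((hasDerivAt_birthFactor_exp hd (prevx x0 xs i) (xs i)).const_mul
    (detectProb p (xs i) (y i))).congr_deriv ?_
  unfold upsRate
  ring

lemma birthFactor_exp_le {d ν μ₁ μ₂ : ℝ} (hd : 0 ≤ d) (hν : 0 ≤ ν) (h₁ : μ₁ ≤ ν) (h₂ : ν ≤ μ₂)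
    (a b : ℕ) :
    birthFactor (exp (-ν * d)) a b ≤ birthFactor (exp (-μ₂ * d)) a b * exp ((μ₂ - μ₁) * d * a) := by
  have hK := ichoose_nonneg ((b : ℤ) - 1) ((a : ℤ) - 1)
  have hυ : exp (-ν * d) ≤ exp (-μ₂ * d) * exp ((μ₂ - μ₁) * d) := by
    rw [← exp_add, exp_le_exp]; nlinarith
  have h1υ : 0 ≤ 1 - exp (-ν * d) := sub_nonneg.2 (exp_le_one_iff.2 (by nlinarith))
  calc birthFactor (exp (-ν * d)) a b
      ≤ ichoose ((b : ℤ) - 1) ((a : ℤ) - 1) * (exp (-μ₂ * d) * exp ((μ₂ - μ₁) * d)) ^ a *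
          (1 - exp (-μ₂ * d)) ^ (b - a) := by
        unfold birthFactor
        gcongr
    _ = birthFactor (exp (-μ₂ * d)) a b * exp ((μ₂ - μ₁) * d * a) := by
        rw [birthFactor, mul_pow, ← exp_nat_mul ((μ₂ - μ₁) * d), mul_comm (a : ℝ)]; ring

lemma birthWeight_upsRate_le {m : ℕ} {t : ℕ → ℝ} (ht : ∀ i < m, t i ≤ t (i + 1))
    {ν μ₁ μ₂ : ℝ} (hν : 0 ≤ ν) (h₁ : μ₁ ≤ ν) (h₂ : ν ≤ μ₂) (x0 : ℕ) (xs : ℕ → ℕ) :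
    birthWeight (upsRate ν t) x0 m xs ≤ birthWeight (upsRate μ₂ t) x0 m xs *
      exp ((μ₂ - μ₁) * ∑ i ∈ range m, (t (i + 1) - t i) * prevx x0 xs i) := by
  rw [mul_sum, exp_sum, birthWeight, birthWeight, ← prod_mul_distrib]
  refine prod_le_prod (fun i hi => birthFactor_nonneg (upsRate_mem_Icc hν
    (ht i (mem_range.1 hi))) _ _) fun i hi => ?_
  rw [← mul_assoc]
  exact birthFactor_exp_le (sub_nonneg.2 (ht i (mem_range.1 hi))) hν h₁ h₂ _ _

lemma sum_mul_prevx_le {m x0 : ℕ} {xs : ℕ → ℕ} (h : ∀ i < m, prevx x0 xs i ≤ xs i)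
    {t : ℕ → ℝ} (ht : ∀ i < m, t i ≤ t (i + 1)) :
    ∑ i ∈ range m, (t (i + 1) - t i) * prevx x0 xs i ≤ (t m - t 0) * prevx x0 xs m := by
  rw [← sum_range_sub, sum_mul]
  refine sum_le_sum fun i hi => ?_
  have hi := mem_range.1 hi
  exact mul_le_mul_of_nonneg_left (Nat.cast_le.2 (prevx_le_prevx h hi.le))
    (sub_nonneg.2 (ht i hi))

lemma abs_mul_div_one_sub_exp_le {d μ ν : ℝ} (hd : 0 < d) (hμ : 0 < μ) (hν : μ ≤ ν)
    {X P N : ℝ} (hX₀ : 0 ≤ X) (hX : X ≤ N) (hP₀ : 0 ≤ P) (hP : P ≤ N) :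
    |d * ((X * exp (-ν * d) - P) / (1 - exp (-ν * d)))| ≤ d / (1 - exp (-μ * d)) * N := by
  have hυ : exp (-ν * d) ≤ exp (-μ * d) := exp_le_exp.2 (by nlinarith)
  have hυμ : exp (-μ * d) < 1 := exp_lt_one_iff.2 (by nlinarith)
  have hnum : |X * exp (-ν * d) - P| ≤ N := abs_sub_le_of_nonneg_of_le
    (mul_nonneg hX₀ (exp_pos _).le) ((mul_le_of_le_one_right hX₀ (hυ.trans hυμ.le)).trans hX) hP₀ hP
  rw [abs_mul, abs_div, abs_of_pos hd, abs_of_pos (show 0 < 1 - exp (-ν * d) by linarith),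
    div_mul_eq_mul_div, mul_div_assoc]
  gcongr
  linarith

lemma abs_popbpScore_le {n : ℕ} {t : ℕ → ℝ} (ht : ∀ i < n, t i < t (i + 1)) {μ ν : ℝ}
    (hμ : 0 < μ) (hν : μ ≤ ν) {x0 : ℕ} {xs : ℕ → ℕ} (h : ∀ i < n, prevx x0 xs i ≤ xs i) :
    |popbpScore n t ν x0 xs| ≤
      (∑ j ∈ range n, (t (j + 1) - t j) / (1 - upsRate μ t j)) * prevx x0 xs n := by
  refine (abs_sum_le_sum_abs _ _).trans ?_
  rw [sum_mul]
  refine sum_le_sum fun j hj => ?_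
  have hj := mem_range.1 hj
  exact abs_mul_div_one_sub_exp_le (sub_pos.2 (ht j hj)) hμ hν (Nat.cast_nonneg _)
    (Nat.cast_le.2 (prevx_le_prevx h hj)) (Nat.cast_nonneg _)
    (Nat.cast_le.2 (prevx_le_prevx h hj.le))

/-- On trajectories of positive probability the score is at most linear in the final population
`N`, and `ε N ≤ exp (ε N)` absorbs that factor; moving the rate from `ν` to `λ + ε` costs at most
`exp (2 ε (t n - t 0) N)`. -/
lemma abs_popbpScore_mul_popbpTerm_le {n : ℕ} {p : ℝ} (hp : p ∈ Set.Icc (0 : ℝ) 1)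
    {t : ℕ → ℝ} (ht : ∀ i < n, t i < t (i + 1)) {lam ε ν : ℝ} (hε : 0 < ε) (hεlam : ε < lam)
    (hν₁ : lam - ε ≤ ν) (hν₂ : ν ≤ lam + ε) (x0 : ℕ) (y xs : ℕ → ℕ) :
    |popbpScore n t ν x0 xs * popbpTerm n p (upsRate ν t) x0 y xs| ≤
      (∑ j ∈ range n, (t (j + 1) - t j) / (1 - upsRate (lam - ε) t j)) / ε *
        (birthWeight (upsRate (lam + ε) t) x0 n xs *
          exp (ε * (2 * (t n - t 0) + 1)) ^ prevx x0 xs n) := by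
  have hmono : ∀ i < n, t i ≤ t (i + 1) := fun i hi => (ht i hi).le
  have hν : 0 ≤ ν := by linarith
  have hυ : ∀ i < n, upsRate ν t i ∈ Set.Icc (0 : ℝ) 1 :=
    fun i hi => upsRate_mem_Icc hν (hmono i hi)
  set N := prevx x0 xs n
  set K := ∑ j ∈ range n, (t (j + 1) - t j) / (1 - upsRate (lam - ε) t j)
  set W := birthWeight (upsRate (lam + ε) t) x0 n xs
  have hK : 0 ≤ K := sum_nonneg fun j hj => div_nonneg (sub_nonneg.2 (hmono j (mem_range.1 hj)))
    (sub_nonneg.2 (upsRate_mem_Icc (by linarith) (hmono j (mem_range.1 hj))).2)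
  have hW : 0 ≤ W := birthWeight_nonneg (fun i hi => upsRate_mem_Icc (by linarith) (hmono i hi)) _ _
  have hF₀ := popbpTerm_nonneg hp hυ x0 y xs
  have hF := (popbpTerm_le_birthWeight hp hυ x0 y xs).trans
    (birthWeight_upsRate_le hmono hν hν₁ hν₂ x0 xs)
  rw [show lam + ε - (lam - ε) = 2 * ε by ring] at hF
  by_cases hpath : ∀ i < n, prevx x0 xs i ≤ xs i
  · have hN : (N : ℝ) ≤ exp (ε * N) / ε := by
      rw [le_div_iff₀ hε]; linarith [add_one_le_exp (ε * N)]
    have hT := sum_mul_prevx_le hpath hmono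
    calc |popbpScore n t ν x0 xs * popbpTerm n p (upsRate ν t) x0 y xs|
        = |popbpScore n t ν x0 xs| * popbpTerm n p (upsRate ν t) x0 y xs := by
          rw [abs_mul, abs_of_nonneg hF₀]
      _ ≤ K * N * (W * exp (2 * ε * ((t n - t 0) * N))) := by
          gcongr
          · exact abs_popbpScore_le ht (by linarith) hν₁ hpath
          · exact hF.trans (by gcongr)
      _ ≤ K * (exp (ε * N) / ε) * (W * exp (2 * ε * ((t n - t 0) * N))) := by gcongr
      _ = K / ε * (W * exp (ε * (2 * (t n - t 0) + 1)) ^ N) := by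
          rw [← exp_nat_mul, show (N : ℝ) * (ε * (2 * (t n - t 0) + 1)) =
            ε * N + 2 * ε * ((t n - t 0) * N) by ring, exp_add]
          ring
  · obtain ⟨i, hi, hlt⟩ : ∃ i < n, xs i < prevx x0 xs i := by simpa using hpath
    have hF0 : popbpTerm n p (upsRate ν t) x0 y xs = 0 :=
      le_antisymm ((popbpTerm_le_birthWeight hp hυ x0 y xs).trans_eq
        (birthWeight_eq_zero_of_lt hi hlt)) hF₀
    rw [hF0, mul_zero, abs_zero]
    positivity

lemma exists_exp_mul_one_sub_exp_lt_one (c T : ℝ) {lam : ℝ} (hlam : 0 < lam) :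
    ∃ ε, 0 < ε ∧ ε < lam ∧ exp (ε * c) * (1 - exp (-(lam + ε) * T)) < 1 := by
  have hcont : ContinuousAt (fun ε => exp (ε * c) * (1 - exp (-(lam + ε) * T))) 0 := by
    fun_prop
  have h0 : exp (0 * c) * (1 - exp (-(lam + 0) * T)) < 1 := by
    simp only [zero_mul, exp_zero, one_mul, add_zero]
    linarith [exp_pos (-lam * T)]
  obtain ⟨ε, hε, hεlam⟩ := (((hcont.eventually_lt continuousAt_const h0).filter_mono
    nhdsWithin_le_nhds).and (Ioo_mem_nhdsGT hlam)).exists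
  exact ⟨ε, hεlam.1, hεlam.2, hε⟩

lemma summable_popbpTerm {n : ℕ} {p : ℝ} (hp : p ∈ Set.Icc (0 : ℝ) 1) {υ : ℕ → ℝ}
    (hυ : ∀ i < n, υ i ∈ Set.Ioc (0 : ℝ) 1) {x0 : ℕ} (hx0 : 1 ≤ x0) (y : ℕ → ℕ) :
    Summable fun x : Fin n → ℕ+ => popbpTerm n p υ x0 y (xbar n x) := by
  have hυ' : ∀ i < n, υ i ∈ Set.Icc (0 : ℝ) 1 := fun i hi => Set.Ioc_subset_Icc_self (hυ i hi)
  have hP : 0 < ∏ i ∈ range n, υ i := prod_pos fun i hi => (hυ i (mem_range.1 hi)).1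
  refine (summable_birthWeight_mul_pow hυ' zero_le_one (by linarith) hx0).of_nonneg_of_le
    (fun x => popbpTerm_nonneg hp hυ' _ _ _) fun x => ?_
  rw [one_pow, mul_one]
  exact popbpTerm_le_birthWeight hp hυ' _ _ _

theorem popbp_likelihood_deriv_general
    (n : ℕ) (p : ℝ) (hp : p ∈ Set.Icc (0 : ℝ) 1)
    (x0 : ℕ) (hx0 : 1 ≤ x0)
    (t : ℕ → ℝ) (ht : ∀ i < n, t i < t (i + 1))
    (y : Fin n → ℕ) :
    ∀ lam : ℝ, 0 < lam →
      Summable (fun x : Fin n → ℕ+ =>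
        |(∑ j ∈ Finset.range n, (t (j + 1) - t j) *
            (((xbar n x j : ℝ) * upsRate lam t j - (prevx x0 (xbar n x) j : ℝ)) /
              (1 - upsRate lam t j))) *
          popbpTerm n p (upsRate lam t) x0 (extFin n y 0) (xbar n x)|) ∧
      HasDerivAt (fun μ => popbpL n p (upsRate μ t) x0 y)
        (∑' x : Fin n → ℕ+,
          (∑ j ∈ Finset.range n, (t (j + 1) - t j) *
              (((xbar n x j : ℝ) * upsRate lam t j - (prevx x0 (xbar n x) j : ℝ)) /
                (1 - upsRate lam t j))) *
            popbpTerm n p (upsRate lam t) x0 (extFin n y 0) (xbar n x)) lam := by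
  intro lam hlam
  obtain ⟨ε, hε, hεlam, hρ⟩ :=
    exists_exp_mul_one_sub_exp_lt_one (2 * (t n - t 0) + 1) (t n - t 0) hlam
  have hυ : ∀ ν, 0 ≤ ν → ∀ i < n, upsRate ν t i ∈ Set.Icc (0 : ℝ) 1 :=
    fun ν hν i hi => upsRate_mem_Icc hν (ht i hi).le
  have hu := (summable_birthWeight_mul_pow (hυ (lam + ε) (by linarith)) (exp_pos _).le
    (by rwa [prod_upsRate]) hx0).mul_left
    ((∑ j ∈ range n, (t (j + 1) - t j) / (1 - upsRate (lam - ε) t j)) / ε)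
  have hbound : ∀ x, ∀ ν ∈ Set.Ioo (lam - ε) (lam + ε),
      ‖popbpScore n t ν x0 (xbar n x) * popbpTerm n p (upsRate ν t) x0 (extFin n y 0) (xbar n x)‖
        ≤ _ := fun x ν hν =>
    abs_popbpScore_mul_popbpTerm_le hp ht hε hεlam hν.1.le hν.2.le x0 _ (xbar n x)
  have hlam_mem : lam ∈ Set.Ioo (lam - ε) (lam + ε) := ⟨by linarith, by linarith⟩
  refine ⟨hu.of_nonneg_of_le (fun _ => abs_nonneg _) fun x => hbound x lam hlam_mem, ?_⟩
  exact hasDerivAt_tsum_of_isPreconnected hu isOpen_Ioo isPreconnected_Ioo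
    (fun x ν hν => hasDerivAt_popbpTerm_upsRate p ht x0 _ _ (by linarith [hν.1]))
    hbound hlam_mem (summable_popbpTerm hp (fun i hi => ⟨exp_pos _, (hυ lam hlam.le i hi).2⟩) hx0 _)
    hlam_mem

/-- The map `λ ↦ L(x_0, y_1, …, y_n)` is differentiable on `(0, ∞)` and its
derivative is the absolutely convergent series
`Σ_{(x_1,…,x_n) ∈ (ℕ∖{0})^n} Σ_{j=1}^{n} (t_j - t_{j-1}) ((x_j υ_{j-1} - x_{j-1})/(1 - υ_{j-1}))`
times the likelihood summand. -/
theorem popbp_likelihood_deriv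
    (n : ℕ) (hn : 1 ≤ n) (p : ℝ) (hp : p ∈ Set.Icc (0 : ℝ) 1)
    (x0 : ℕ) (hx0 : 1 ≤ x0)
    (t : ℕ → ℝ) (ht0 : t 0 = 0) (ht : ∀ i < n, t i < t (i + 1))
    (y : Fin n → ℕ) :
    ∀ lam : ℝ, 0 < lam →
      Summable (fun x : Fin n → ℕ+ =>
        |(∑ j ∈ Finset.range n, (t (j + 1) - t j) *
            (((xbar n x j : ℝ) * upsRate lam t j - (prevx x0 (xbar n x) j : ℝ)) /
              (1 - upsRate lam t j))) *
          popbpTerm n p (upsRate lam t) x0 (extFin n y 0) (xbar n x)|) ∧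
      HasDerivAt (fun μ => popbpL n p (upsRate μ t) x0 y)
        (∑' x : Fin n → ℕ+,
          (∑ j ∈ Finset.range n, (t (j + 1) - t j) *
              (((xbar n x j : ℝ) * upsRate lam t j - (prevx x0 (xbar n x) j : ℝ)) /
                (1 - upsRate lam t j))) *
            popbpTerm n p (upsRate lam t) x0 (extFin n y 0) (xbar n x)) lam :=
  popbp_likelihood_deriv_general n p hp x0 hx0 t ht y
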